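/- arXiv:2504.18767 — 2 statements merged into one kernel-verified Lean document; each statement's English description precedes it below -/
import Mathlib

section
/- Let G=(V,E) be an undirected graph and E₁ ⊆ E a subset of edges with a fixed orientation Ē₁. Then Ē₁ can be extended to an orientation F̄ of some superset F ⊇ E₁ of edges that is partially k-cut-balanced (i.e., |δ⁺_{F̄}(U)| ≤ ((k−1)/k)|δ_F(U)| for all U ⊆ V) if and only if |δ⁺_{Ē₁}(U)| ≤ ((k−1)/k)|δ_E(U)| for every U ⊆ V. -/
/-!
Look for an integer circulation `g` with `1 ≤ g ≤ k - 1` on the arcs of `Ē₁` oriented along the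
reference direction, `1 - k ≤ g ≤ -1` on those oriented against it, and `|g| ≤ k - 1` elsewhere.
Orienting every edge of the support of `g` along its flow extends `Ē₁`, and the extension is
partially `k`-cut-balanced: across any cut the flow out equals the flow in, every outgoing arc
carries at least `1` and every incoming arc at most `k - 1`, so `|δ⁺(U)| ≤ (k - 1) |δ⁻(U)|`.
For these bounds Hoffman's condition at `U` is exactly the cut inequality at `Uᶜ`.

Hoffman's theorem itself is proved by induction on `∑ (u - l)`: raise one lower bound or lower one
upper bound by `1`; if both moves violate the cut condition, the two tight sets they produce
contradict the submodularity of the slack.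
-/

open Finset

section Circulation

variable {V E : Type*} [DecidableEq V] [Fintype E] (src tgt : E → V)

def cutOut (f : E → ℤ) (U : Finset V) : ℤ :=
  ∑ e with src e ∈ U ∧ tgt e ∉ U, f e

def cutIn (f : E → ℤ) (U : Finset V) : ℤ :=
  cutOut tgt src f U

def cutSlack (l u : E → ℤ) (U : Finset V) : ℤ :=
  cutOut src tgt u U - cutIn src tgt l U

/-- Hoffman's condition for the existence of a circulation between `l` and `u`. -/
def CutCondition (l u : E → ℤ) : Prop :=
  ∀ U : Finset V, 0 ≤ cutSlack src tgt l u U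

/-- Conservation across every vertex set, which is equivalent to conservation at every vertex. -/
def IsCirculation (g : E → ℤ) : Prop :=
  ∀ U : Finset V, cutIn src tgt g U = cutOut src tgt g U

variable {src tgt}

lemma cutOut_compl [Fintype V] (f : E → ℤ) (U : Finset V) :
    cutOut src tgt f Uᶜ = cutIn src tgt f U := by
  unfold cutIn cutOut
  exact sum_congr (filter_congr fun e _ => by simp [and_comm]) fun _ _ => rfl

lemma cutIn_compl [Fintype V] (f : E → ℤ) (U : Finset V) :
    cutIn src tgt f Uᶜ = cutOut src tgt f U :=
  cutOut_compl (src := tgt) (tgt := src) f U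

lemma cutCondition_self_iff_isCirculation [Fintype V] (g : E → ℤ) :
    CutCondition src tgt g g ↔ IsCirculation src tgt g := by
  refine ⟨fun h U => le_antisymm ?_ ?_, fun h U => by simp [cutSlack, h U]⟩
  · simpa [cutSlack] using h U
  · simpa [cutSlack, cutOut_compl, cutIn_compl] using h Uᶜ

lemma cutSlack_inter_add_cutSlack_union (l u : E → ℤ) (U₁ U₂ : Finset V) :
    cutSlack src tgt l u (U₁ ∩ U₂) + cutSlack src tgt l u (U₁ ∪ U₂)
      + ∑ e with (src e ∈ U₂ ∧ src e ∉ U₁ ∧ tgt e ∈ U₁ ∧ tgt e ∉ U₂) ∨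
          (src e ∈ U₁ ∧ src e ∉ U₂ ∧ tgt e ∈ U₂ ∧ tgt e ∉ U₁), (u e - l e)
      = cutSlack src tgt l u U₁ + cutSlack src tgt l u U₂ := by
  simp only [cutSlack, cutIn, cutOut, sum_filter, ← sum_sub_distrib, ← sum_add_distrib]
  refine sum_congr rfl fun e _ => ?_
  by_cases h1 : src e ∈ U₁ <;> by_cases h2 : src e ∈ U₂ <;>
    by_cases h3 : tgt e ∈ U₁ <;> by_cases h4 : tgt e ∈ U₂ <;>
    simp [h1, h2, h3, h4] <;> ring

variable [DecidableEq E]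

lemma cutSlack_add_single (l u : E → ℤ) (e₀ : E) (U : Finset V) :
    cutSlack src tgt (l + Pi.single e₀ 1) u U
      = cutSlack src tgt l u U - if tgt e₀ ∈ U ∧ src e₀ ∉ U then 1 else 0 := by
  simp only [cutSlack, cutOut, cutIn, Pi.add_apply, sum_add_distrib, sum_pi_single', mem_filter,
    mem_univ, true_and]
  ring

lemma cutSlack_sub_single (l u : E → ℤ) (e₀ : E) (U : Finset V) :
    cutSlack src tgt l (u - Pi.single e₀ 1) U
      = cutSlack src tgt l u U - if src e₀ ∈ U ∧ tgt e₀ ∉ U then 1 else 0 := by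
  simp only [cutSlack, cutOut, cutIn, Pi.sub_apply, sum_sub_distrib, sum_pi_single', mem_filter,
    mem_univ, true_and]
  ring

/-- If both moves fail, there are tight sets `U₁` entered by `e₀` and `U₂` left by `e₀`, and
submodularity forces a negative slack at `U₁ ∩ U₂` or `U₁ ∪ U₂`. -/
lemma CutCondition.add_single_or_sub_single {l u : E → ℤ} (h : CutCondition src tgt l u)
    (hlu : l ≤ u) {e₀ : E} (he₀ : l e₀ < u e₀) :
    CutCondition src tgt (l + Pi.single e₀ 1) u ∨ CutCondition src tgt l (u - Pi.single e₀ 1) := by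
  by_contra hfail
  simp only [CutCondition, not_or, not_forall, not_le] at hfail
  obtain ⟨⟨U₁, hU₁⟩, ⟨U₂, hU₂⟩⟩ := hfail
  rw [cutSlack_add_single] at hU₁
  rw [cutSlack_sub_single] at hU₂
  have h₁ := h U₁
  have h₂ := h U₂
  have hin : tgt e₀ ∈ U₁ ∧ src e₀ ∉ U₁ := by by_contra hn; rw [if_neg hn] at hU₁; omega
  have hout : src e₀ ∈ U₂ ∧ tgt e₀ ∉ U₂ := by by_contra hn; rw [if_neg hn] at hU₂; omega
  rw [if_pos hin] at hU₁
  rw [if_pos hout] at hU₂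
  have hcross : u e₀ - l e₀ ≤ ∑ e with (src e ∈ U₂ ∧ src e ∉ U₁ ∧ tgt e ∈ U₁ ∧ tgt e ∉ U₂) ∨
      (src e ∈ U₁ ∧ src e ∉ U₂ ∧ tgt e ∈ U₂ ∧ tgt e ∉ U₁), (u e - l e) :=
    single_le_sum (fun e _ => sub_nonneg.2 (hlu e)) (by simp [hin.1, hin.2, hout.1, hout.2])
  have := cutSlack_inter_add_cutSlack_union (src := src) (tgt := tgt) l u U₁ U₂
  have := h (U₁ ∩ U₂)
  have := h (U₁ ∪ U₂)
  omega

lemma exists_circulation_of_sum_sub_eq [Fintype V] (n : ℕ) :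
    ∀ {l u : E → ℤ}, CutCondition src tgt l u → l ≤ u → ∑ e, (u e - l e) = n →
      ∃ g, l ≤ g ∧ g ≤ u ∧ IsCirculation src tgt g := by
  induction n with
  | zero =>
    intro l u h hlu hsum
    obtain rfl : u = l := funext fun e => by
      have := (sum_eq_zero_iff_of_nonneg fun e _ => sub_nonneg.2 (hlu e)).1 hsum e (mem_univ e)
      omega
    exact ⟨u, le_rfl, le_rfl, (cutCondition_self_iff_isCirculation u).1 h⟩
  | succ n ih =>
    intro l u h hlu hsum
    obtain ⟨e₀, -, he₀⟩ : ∃ e₀ ∈ univ, 0 < u e₀ - l e₀ :=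
      exists_lt_of_sum_lt (by simp only [sum_const_zero, hsum]; omega)
    have hsingle : (0 : E → ℤ) ≤ Pi.single e₀ 1 := Pi.single_nonneg.2 zero_le_one
    have hle : (Pi.single e₀ 1 : E → ℤ) ≤ u - l := fun e => by
      rcases eq_or_ne e e₀ with rfl | he
      · simp only [Pi.single_eq_same, Pi.sub_apply]; omega
      · simpa [he] using hlu e
    have hsum' : ∑ e, (Pi.single e₀ 1 : E → ℤ) e = 1 := by simp [sum_pi_single']
    rcases h.add_single_or_sub_single hlu (sub_pos.1 he₀) with hraise | hlower
    · obtain ⟨g, hlg, hgu, hg⟩ := ih hraise (le_sub_iff_add_le'.1 hle)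
        (by simp only [Pi.add_apply, sub_add_eq_sub_sub, sum_sub_distrib] at hsum ⊢; omega)
      exact ⟨g, le_trans (le_add_of_nonneg_right hsingle) hlg, hgu, hg⟩
    · obtain ⟨g, hlg, hgu, hg⟩ := ih hlower (le_sub_comm.1 hle)
        (by simp only [Pi.sub_apply, sum_sub_distrib] at hsum ⊢; omega)
      exact ⟨g, hlg, le_trans hgu (sub_le_self _ hsingle), hg⟩

omit [DecidableEq E] in
theorem CutCondition.exists_circulation [Fintype V] {l u : E → ℤ} (h : CutCondition src tgt l u)
    (hlu : l ≤ u) : ∃ g, l ≤ g ∧ g ≤ u ∧ IsCirculation src tgt g := by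
  classical
  exact exists_circulation_of_sum_sub_eq _ h hlu
    (Int.toNat_of_nonneg (sum_nonneg fun e _ => sub_nonneg.2 (hlu e))).symm

end Circulation

section Orientation

variable {V E : Type*} [DecidableEq V] (src tgt : E → V)

def outArcs (o : E → Bool) (F : Finset E) (U : Finset V) : Finset E :=
  F.filter fun e => (o e = true ∧ src e ∈ U ∧ tgt e ∉ U) ∨ (o e = false ∧ tgt e ∈ U ∧ src e ∉ U)

def cutEdges (F : Finset E) (U : Finset V) : Finset E :=
  F.filter fun e => (src e ∈ U ∧ tgt e ∉ U) ∨ (tgt e ∈ U ∧ src e ∉ U)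

variable {src tgt}

lemma outArcs_mono {o o' : E → Bool} {F F' : Finset E} (hF : F ⊆ F') (ho : ∀ e ∈ F, o e = o' e)
    (U : Finset V) : outArcs src tgt o F U ⊆ outArcs src tgt o' F' U := by
  intro e he
  simp only [outArcs, mem_filter] at he ⊢
  exact ⟨hF he.1, ho e he.1 ▸ he.2⟩

lemma cutEdges_mono {F F' : Finset E} (hF : F ⊆ F') (U : Finset V) :
    cutEdges src tgt F U ⊆ cutEdges src tgt F' U :=
  filter_subset_filter _ hF

variable [Fintype V]

lemma cutEdges_compl (F : Finset E) (U : Finset V) :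
    cutEdges src tgt F Uᶜ = cutEdges src tgt F U :=
  filter_congr fun e _ => by simp only [mem_compl, not_not]; tauto

lemma card_cutEdges (o : E → Bool) (F : Finset E) (U : Finset V) :
    #(cutEdges src tgt F U) = #(outArcs src tgt o F U) + #(outArcs src tgt o F Uᶜ) := by
  simp only [cutEdges, outArcs, card_filter, ← sum_add_distrib, mem_compl]
  refine sum_congr rfl fun e _ => ?_
  cases o e <;> by_cases hs : src e ∈ U <;> by_cases ht : tgt e ∈ U <;> simp [hs, ht]

variable [Fintype E]

lemma IsCirculation.sum_abs_outArcs_eq {g : E → ℤ} (hg : IsCirculation src tgt g)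
    (U : Finset V) :
    ∑ e ∈ outArcs src tgt (fun e => decide (0 < g e)) {e | g e ≠ 0} U, |g e|
      = ∑ e ∈ outArcs src tgt (fun e => decide (0 < g e)) {e | g e ≠ 0} Uᶜ, |g e| := by
  rw [← sub_eq_zero]
  calc _ = cutOut src tgt g U - cutIn src tgt g U := by
        simp only [cutIn, cutOut, outArcs, filter_filter, sum_filter, ← sum_sub_distrib, mem_compl]
        refine sum_congr rfl fun e _ => ?_
        rcases lt_trichotomy (g e) 0 with hg | hg | hg
        · by_cases hs : src e ∈ U <;> by_cases ht : tgt e ∈ U <;>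
            simp [hs, ht, hg.ne, hg.le, abs_of_neg hg]
        · simp [hg]
        · by_cases hs : src e ∈ U <;> by_cases ht : tgt e ∈ U <;>
            simp [hs, ht, hg, hg.ne', abs_of_pos hg]
    _ = 0 := by rw [hg U, sub_self]

lemma IsCirculation.cutBalanced {g : E → ℤ} {k : ℤ} (hg : IsCirculation src tgt g)
    (hbound : ∀ e, |g e| ≤ k - 1) (U : Finset V) :
    k * #(outArcs src tgt (fun e => decide (0 < g e)) {e | g e ≠ 0} U)
      ≤ (k - 1) * #(cutEdges src tgt {e | g e ≠ 0} U) := by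
  set o : E → Bool := fun e => decide (0 < g e)
  have hout : (#(outArcs src tgt o {e | g e ≠ 0} U) : ℤ)
      ≤ ∑ e ∈ outArcs src tgt o {e | g e ≠ 0} U, |g e| := by
    rw [card_eq_sum_ones, Nat.cast_sum, Nat.cast_one]
    exact sum_le_sum fun e he => Int.one_le_abs (mem_filter.1 (mem_filter.1 he).1).2
  have hin : ∑ e ∈ outArcs src tgt o {e | g e ≠ 0} Uᶜ, |g e|
      ≤ #(outArcs src tgt o {e | g e ≠ 0} Uᶜ) * (k - 1) := by
    rw [← nsmul_eq_mul]
    exact sum_le_card_nsmul _ _ _ fun e _ => hbound e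
  rw [card_cutEdges o, Nat.cast_add]
  linarith [hg.sum_abs_outArcs_eq U]

end Orientation

section ExtensionBounds

variable {E : Type*} [DecidableEq E]

/-- A circulation between these bounds is nonzero on `E₁`, with the sign prescribed by `o₁`, and
has absolute value at most `k - 1` everywhere. -/
def extensionLower (k : ℤ) (E₁ : Finset E) (o₁ : E → Bool) : E → ℤ :=
  fun e => if e ∈ E₁ ∧ o₁ e = true then 1 else 1 - k

def extensionUpper (k : ℤ) (E₁ : Finset E) (o₁ : E → Bool) : E → ℤ :=
  fun e => if e ∈ E₁ ∧ o₁ e = false then -1 else k - 1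

variable {k : ℤ} {E₁ : Finset E} {o₁ : E → Bool}

lemma extensionLower_le_extensionUpper (hk : 2 ≤ k) :
    extensionLower k E₁ o₁ ≤ extensionUpper k E₁ o₁ := fun e => by
  unfold extensionLower extensionUpper
  split_ifs <;> simp_all <;> omega

lemma abs_le_of_extensionLower_le_of_le_extensionUpper {g : E → ℤ}
    (hl : extensionLower k E₁ o₁ ≤ g) (hu : g ≤ extensionUpper k E₁ o₁) (e : E) :
    |g e| ≤ k - 1 := by
  have hle := hl e
  have hue := hu e
  simp only [extensionLower, extensionUpper] at hle hue
  rw [abs_le]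
  constructor <;> split_ifs at hle hue <;> omega

lemma sign_of_extensionLower_le_of_le_extensionUpper {g : E → ℤ}
    (hl : extensionLower k E₁ o₁ ≤ g) (hu : g ≤ extensionUpper k E₁ o₁) {e : E} (he : e ∈ E₁) :
    g e ≠ 0 ∧ decide (0 < g e) = o₁ e := by
  have hle := hl e
  have hue := hu e
  cases ho : o₁ e <;> simp [extensionLower, extensionUpper, he, ho] at hle hue ⊢ <;> omega

variable {V : Type*} [DecidableEq V] [Fintype V] [Fintype E] {src tgt : E → V}

lemma cutSlack_extensionLower_extensionUpper (U : Finset V) :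
    cutSlack src tgt (extensionLower k E₁ o₁) (extensionUpper k E₁ o₁) U
      = (k - 1) * #(cutEdges src tgt univ U) - k * #(outArcs src tgt o₁ E₁ Uᶜ) := by
  rw [show outArcs src tgt o₁ E₁ Uᶜ = outArcs src tgt o₁ {e | e ∈ E₁} Uᶜ by rw [filter_univ_mem]]
  simp only [cutSlack, cutIn, cutOut, cutEdges, outArcs, filter_filter, natCast_card_filter,
    sum_filter, mul_sum, ← sum_sub_distrib]
  refine sum_congr rfl fun e _ => ?_
  by_cases hE : e ∈ E₁ <;> cases ho : o₁ e <;>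
    by_cases hs : src e ∈ U <;> by_cases ht : tgt e ∈ U <;>
    simp [extensionLower, extensionUpper, hE, ho, hs, ht]

lemma cutCondition_extensionLower_extensionUpper
    (h : ∀ U : Finset V, k * #(outArcs src tgt o₁ E₁ U) ≤ (k - 1) * #(cutEdges src tgt univ U)) :
    CutCondition src tgt (extensionLower k E₁ o₁) (extensionUpper k E₁ o₁) := fun U => by
  rw [cutSlack_extensionLower_extensionUpper, ← cutEdges_compl univ U]
  linarith [h Uᶜ]

end ExtensionBounds

lemma natCast_le_div_mul_iff {k : ℕ} (hk : 0 < k) (a b : ℕ) :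
    (a : ℝ) ≤ ((k : ℝ) - 1) / k * b ↔ (k : ℤ) * a ≤ ((k : ℤ) - 1) * b := by
  rw [div_mul_eq_mul_div, le_div_iff₀ (by exact_mod_cast hk), mul_comm]
  exact_mod_cast Iff.rfl

/-- An orientation is `o : E → Bool`, with `true` meaning the reference direction `src → tgt`. -/
theorem extends_to_partial_cut_balanced_iff {V E : Type}
    [Fintype V] [DecidableEq V] [Fintype E] [DecidableEq E]
    (src tgt : E → V) (k : ℕ) (hk : 2 ≤ k) (E₁ : Finset E) (o₁ : E → Bool) :
    (∃ (F : Finset E) (o : E → Bool), E₁ ⊆ F ∧ (∀ e ∈ E₁, o e = o₁ e) ∧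
      ∀ U : Finset V,
        ((F.filter (fun e => (o e = true ∧ src e ∈ U ∧ tgt e ∉ U) ∨
            (o e = false ∧ tgt e ∈ U ∧ src e ∉ U))).card : ℝ) ≤
          (((k : ℝ) - 1) / (k : ℝ)) *
            ((F.filter (fun e =>
              (src e ∈ U ∧ tgt e ∉ U) ∨ (tgt e ∈ U ∧ src e ∉ U))).card : ℝ))
    ↔ (∀ U : Finset V,
        ((E₁.filter (fun e => (o₁ e = true ∧ src e ∈ U ∧ tgt e ∉ U) ∨
            (o₁ e = false ∧ tgt e ∈ U ∧ src e ∉ U))).card : ℝ) ≤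
          (((k : ℝ) - 1) / (k : ℝ)) *
            ((Finset.univ.filter (fun e =>
              (src e ∈ U ∧ tgt e ∉ U) ∨ (tgt e ∈ U ∧ src e ∉ U))).card : ℝ)) := by
  simp only [natCast_le_div_mul_iff (by omega : 0 < k)]
  constructor
  · rintro ⟨F, o, hF, ho, hbal⟩ U
    calc (k : ℤ) * #(outArcs src tgt o₁ E₁ U) ≤ k * #(outArcs src tgt o F U) := by
          gcongr; exact outArcs_mono hF (fun e he => (ho e he).symm) U
      _ ≤ (k - 1) * #(cutEdges src tgt F U) := hbal U
      _ ≤ (k - 1) * #(cutEdges src tgt univ U) := by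
          gcongr
          · omega
          · exact cutEdges_mono (subset_univ F) U
  · intro h
    obtain ⟨g, hlg, hgu, hg⟩ := (cutCondition_extensionLower_extensionUpper h).exists_circulation
      (extensionLower_le_extensionUpper (by omega))
    refine ⟨({e | g e ≠ 0} : Finset E), fun e => decide (0 < g e), fun e he => ?_, fun e he => ?_,
      hg.cutBalanced (abs_le_of_extensionLower_le_of_le_extensionUpper hlg hgu)⟩
    · simpa using (sign_of_extensionLower_le_of_le_extensionUpper hlg hgu he).1
    · exact (sign_of_extensionLower_le_of_le_extensionUpper hlg hgu he).2
end

section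
/- If every instance of the min-cost nowhere-zero k-flow problem admits an (α,β)-bicriteria approximation (a nowhere-zero βk-flow of cost at most α times the min cost of a nowhere-zero k-flow), then every instance of the min-cost k-cut-balanced orientation problem admits a ((k−1)α, β)-bicriteria approximation: specifically, if (Ē, f) is a nowhere-zero βk-flow with c(f) ≤ α·c(f₁*) where f₁* is a min-cost nowhere-zero k-flow, then Ē is a βk-cut-balanced orientation with c(Ē) ≤ (k−1)α·c(Ē₂*) where Ē₂* is a min-cost k-cut-balanced orientation. -/
open Finset

variable {V E : Type} [Fintype V] [DecidableEq V] [Fintype E]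

/-- `(o, f)` is a nowhere-zero m-flow: values in {1,...,m−1} on the chosen
orientation (`o e = true` means src e → tgt e), conserved at every vertex. -/
def NZFlow (src tgt : E → V) (m : ℕ) (o : E → Bool) (f : E → ℤ) : Prop :=
  (∀ e, 1 ≤ f e ∧ f e ≤ (m : ℤ) - 1) ∧
  ∀ v : V,
    (∑ e : E, if (if o e then src e else tgt e) = v then f e else 0) =
    (∑ e : E, if (if o e then tgt e else src e) = v then f e else 0)

/-- Orientation `o` is m-cut-balanced: m·|δ⁺(U)| ≥ |δ(U)| for every cut. -/
def CutBalanced (src tgt : E → V) (m : ℕ) (o : E → Bool) : Prop :=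
  ∀ U : Finset V, U.Nonempty → U ≠ Finset.univ →
    ((Finset.univ.filter (fun e => (o e = true ∧ src e ∈ U ∧ tgt e ∉ U) ∨
        (o e = false ∧ tgt e ∈ U ∧ src e ∉ U))).card : ℝ) ≥
      (1 / (m : ℝ)) * ((Finset.univ.filter (fun e =>
        (src e ∈ U ∧ tgt e ∉ U) ∨ (tgt e ∈ U ∧ src e ∉ U))).card : ℝ)

/-- Cost of an orientation: asymmetric costs `c e b` for edge `e` oriented by `b`. -/
def costOrient (c : E → Bool → ℤ) (o : E → Bool) : ℤ := ∑ e : E, c e (o e)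

/-- Cost of a flow `(o, f)`. -/
def costFlow (c : E → Bool → ℤ) (o : E → Bool) (f : E → ℤ) : ℤ := ∑ e : E, c e (o e) * f e

/-! A nowhere-zero `m`-flow is a circulation with values in `[1, m - 1]` on the orientation it
uses, so counting the flow across a cut `U` gives `|δ⁻(U)| ≤ (m - 1) |δ⁺(U)|`: the orientation is
`m`-cut-balanced. Conversely, by Hoffman's circulation theorem this cut condition yields a
circulation with values in `[1, m - 1]`. We prove Hoffman's theorem by taking a `[1, K]`-bounded
`f` of least total excess: if some vertex had positive excess, either a deficit vertex is reachable
from it in the residual graph, and augmenting along that path lowers the excess, or the reachable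
set is closed, so `f` saturates its boundary and the cut condition bounds the excess inside by `0`.
Then, for a nowhere-zero `k`-flow `g` on `Ē₂`,
`c(Ē) ≤ c(f) ≤ α c(f₁*) ≤ α c(g) ≤ α (k - 1) c(Ē₂)`. -/

namespace Circulation

variable {V A : Type*} (tl hd : A → V)

def Bounded (K : ℤ) (f : A → ℤ) : Prop := ∀ a, 1 ≤ f a ∧ f a ≤ K

def ResidualAdj (K : ℤ) (f : A → ℤ) (u w : V) : Prop :=
  ∃ a, (tl a = u ∧ hd a = w ∧ f a < K) ∨ (tl a = w ∧ hd a = u ∧ 1 < f a)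

def ResidualPath (K : ℤ) (f : A → ℤ) : ℕ → V → V → Prop
  | 0, u, w => u = w
  | n + 1, u, w => ∃ x, ResidualAdj tl hd K f u x ∧ ResidualPath K f n x w

section

variable [DecidableEq V] [Fintype A]

def netInflow (f : A → ℤ) (v : V) : ℤ :=
  (∑ a, if hd a = v then f a else 0) - ∑ a, if tl a = v then f a else 0

def entering (U : Finset V) : Finset A := univ.filter fun a => hd a ∈ U ∧ tl a ∉ U

def leaving (U : Finset V) : Finset A := univ.filter fun a => tl a ∈ U ∧ hd a ∉ U

def totalExcess [Fintype V] (f : A → ℤ) : ℤ := ∑ v, max (netInflow tl hd f v) 0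

def CutCondition [Fintype V] (K : ℤ) : Prop :=
  ∀ U : Finset V, U.Nonempty → U ≠ univ →
    ((entering tl hd U).card : ℤ) ≤ K * (leaving tl hd U).card

end

variable {tl hd}

theorem ResidualPath.succ_right {K : ℤ} {f : A → ℤ} :
    ∀ {n : ℕ} {u x y : V}, ResidualPath tl hd K f n u x → ResidualAdj tl hd K f x y →
      ResidualPath tl hd K f (n + 1) u y
  | 0, _, _, _, rfl, hxy => ⟨_, hxy, rfl⟩
  | _ + 1, _, _, _, ⟨z, huz, hzx⟩, hxy => ⟨z, huz, hzx.succ_right hxy⟩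

/-- If every residual arc of `f` except `u → w` is a residual arc of `f'`, a residual path of
`f` survives in `f'`, possibly shortened to the part after its last use of `u → w`. -/
theorem ResidualPath.of_residualAdj_imp {K : ℤ} {f f' : A → ℤ} {u w v : V}
    (hadj : ∀ x y, ResidualAdj tl hd K f x y → ResidualAdj tl hd K f' x y ∨ (x = u ∧ y = w)) :
    ∀ {n : ℕ} {x : V}, ResidualPath tl hd K f n x v →
      ∃ m ≤ n, ResidualPath tl hd K f' m x v ∨ ResidualPath tl hd K f' m w v
  | 0, _, h => ⟨0, le_rfl, Or.inl h⟩
  | n + 1, x, ⟨y, hxy, hyv⟩ => by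
    obtain ⟨m, hm, hy | hw⟩ := of_residualAdj_imp hadj hyv
    · rcases hadj x y hxy with hxy' | ⟨-, rfl⟩
      · exact ⟨m + 1, by omega, Or.inl ⟨y, hxy', hy⟩⟩
      · exact ⟨m, by omega, Or.inr hy⟩
    · exact ⟨m, by omega, Or.inr hw⟩

variable [DecidableEq V] [Fintype A]

theorem sum_netInflow (f : A → ℤ) (U : Finset V) :
    ∑ v ∈ U, netInflow tl hd f v =
      ∑ a ∈ entering tl hd U, f a - ∑ a ∈ leaving tl hd U, f a := by
  have hsum (g : A → V) :
      ∑ v ∈ U, (∑ a, if g a = v then f a else 0) = ∑ a, if g a ∈ U then f a else 0 := by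
    rw [Finset.sum_comm]
    simp [Finset.sum_ite_eq]
  simp only [netInflow, Finset.sum_sub_distrib, hsum, entering, leaving, Finset.sum_filter]
  rw [← Finset.sum_sub_distrib, ← Finset.sum_sub_distrib]
  refine Finset.sum_congr rfl fun a _ => ?_
  by_cases h₁ : hd a ∈ U <;> by_cases h₂ : tl a ∈ U <;> simp [h₁, h₂]

theorem sum_univ_netInflow [Fintype V] (f : A → ℤ) : ∑ v, netInflow tl hd f v = 0 := by
  simp [sum_netInflow, entering, leaving]

theorem exists_netInflow_neg [Fintype V] {f : A → ℤ} {s : V} (hs : 0 < netInflow tl hd f s) :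
    ∃ v, netInflow tl hd f v < 0 := by
  by_contra! h
  have := Finset.sum_pos' (fun v _ => h v) ⟨s, mem_univ s, hs⟩
  rw [sum_univ_netInflow] at this
  exact this.false

theorem card_entering_le_of_netInflow_eq_zero {M : ℤ} {f : A → ℤ} (hf : Bounded M f)
    (h₀ : ∀ v, netInflow tl hd f v = 0) (U : Finset V) :
    ((entering tl hd U).card : ℤ) ≤ M * (leaving tl hd U).card := by
  have hU := sum_netInflow (tl := tl) (hd := hd) f U
  rw [Finset.sum_eq_zero fun v _ => h₀ v] at hU
  have hin : ((entering tl hd U).card : ℤ) ≤ ∑ a ∈ entering tl hd U, f a := by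
    simpa using Finset.card_nsmul_le_sum _ f 1 fun a _ => (hf a).1
  have hout : ∑ a ∈ leaving tl hd U, f a ≤ (leaving tl hd U).card * M := by
    simpa using Finset.sum_le_card_nsmul _ f M fun a _ => (hf a).2
  linarith

theorem netInflow_add_single [DecidableEq A] (f : A → ℤ) (a : A) (d : ℤ) (v : V) :
    netInflow tl hd (f + Pi.single a d) v =
      netInflow tl hd f v + (if v = hd a then d else 0) - (if v = tl a then d else 0) := by
  have hsum (g : A → V) : (∑ x, if g x = v then (f + Pi.single a d : A → ℤ) x else 0) =
      (∑ x, if g x = v then f x else 0) + if v = g a then d else 0 := by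
    simp only [Pi.add_apply, ite_add_zero, Finset.sum_add_distrib, add_right_inj]
    rw [Fintype.sum_eq_single a fun x hx => by simp [hx]]
    simp [eq_comm]
  rw [netInflow, netInflow, hsum, hsum]
  ring

theorem exists_push {K : ℤ} {f : A → ℤ} (hf : Bounded K f) {u w : V}
    (h : ResidualAdj tl hd K f u w) :
    ∃ f', Bounded K f' ∧
      (∀ v, netInflow tl hd f' v =
        netInflow tl hd f v + (if v = w then 1 else 0) - (if v = u then 1 else 0)) ∧
      ∀ x y, ResidualAdj tl hd K f x y → ResidualAdj tl hd K f' x y ∨ (x = u ∧ y = w) := by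
  classical
  obtain ⟨a, ⟨rfl, rfl, ha⟩ | ⟨rfl, rfl, ha⟩⟩ := h
  · refine ⟨f + Pi.single a 1, fun b => ?_, fun v => netInflow_add_single f a 1 v, ?_⟩
    · have := hf b
      rcases eq_or_ne b a with rfl | hb
      · simp
        omega
      · simpa [hb] using this
    · rintro x y ⟨b, hb⟩
      by_cases hba : b = a
      · subst hba
        rcases hb with ⟨rfl, rfl, -⟩ | ⟨rfl, rfl, -⟩
        · exact Or.inr ⟨rfl, rfl⟩
        · exact Or.inl ⟨b, Or.inr ⟨rfl, rfl, by simp; linarith [(hf b).1]⟩⟩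
      · exact Or.inl ⟨b, by simpa [hba, Pi.single_apply] using hb⟩
  · refine ⟨f + Pi.single a (-1), fun b => ?_, fun v => ?_, ?_⟩
    · have := hf b
      rcases eq_or_ne b a with rfl | hb
      · simp
        omega
      · simpa [hb] using this
    · rw [netInflow_add_single]
      split_ifs <;> ring
    · rintro x y ⟨b, hb⟩
      by_cases hba : b = a
      · subst hba
        rcases hb with ⟨rfl, rfl, -⟩ | ⟨rfl, rfl, -⟩
        · exact Or.inl ⟨b, Or.inl ⟨rfl, rfl, by simp; linarith [(hf b).2]⟩⟩
        · exact Or.inr ⟨rfl, rfl⟩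
      · exact Or.inl ⟨b, by simpa [hba, Pi.single_apply] using hb⟩

theorem totalExcess_eq_of_push [Fintype V] {f f' : A → ℤ} {u w : V} (huw : u ≠ w)
    (hf' : ∀ v, netInflow tl hd f' v =
      netInflow tl hd f v + (if v = w then 1 else 0) - (if v = u then 1 else 0))
    (hu : 0 < netInflow tl hd f u) :
    totalExcess tl hd f' = totalExcess tl hd f - if netInflow tl hd f w < 0 then 1 else 0 := by
  have hpoint (v : V) : max (netInflow tl hd f' v) 0 = max (netInflow tl hd f v) 0
      + (if v = w then (if netInflow tl hd f w < 0 then 0 else 1) else 0)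
      - (if v = u then 1 else 0) := by
    rw [hf' v]
    rcases eq_or_ne v w with rfl | hvw
    · simp only [if_neg huw.symm, max_def]
      split_ifs <;> omega
    · rcases eq_or_ne v u with rfl | hvu
      · simp only [if_neg hvw, max_def]
        split_ifs <;> omega
      · simp [hvw, hvu]
  simp only [totalExcess, hpoint, Finset.sum_sub_distrib, Finset.sum_add_distrib,
    Finset.sum_ite_eq', mem_univ, if_true]
  split_ifs <;> ring

theorem exists_totalExcess_lt_of_residualPath [Fintype V] {K : ℤ} {v : V} (n : ℕ) :
    ∀ {f : A → ℤ} {s : V}, Bounded K f → 0 < netInflow tl hd f s → netInflow tl hd f v < 0 →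
      ResidualPath tl hd K f n s v →
        ∃ f', Bounded K f' ∧ totalExcess tl hd f' < totalExcess tl hd f := by
  induction n using Nat.strong_induction_on with
  | _ n ih =>
  intro f s hf hs hv hsv
  cases n with
  | zero =>
    subst hsv
    omega
  | succ n =>
    obtain ⟨b, hsb, hbv⟩ := hsv
    obtain rfl | hne := eq_or_ne s b
    · exact ih n n.lt_succ_self hf hs hv hbv
    obtain ⟨f', hf', hnet, hadj⟩ := exists_push hf hsb
    have hexcess := totalExcess_eq_of_push hne hnet hs
    by_cases hb : netInflow tl hd f b < 0
    · exact ⟨f', hf', by rw [hexcess, if_pos hb]; omega⟩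
    -- the unit pushed from `s` now sits at `b`, one step closer to `v`
    have hb' : 0 < netInflow tl hd f' b := by
      rw [hnet, if_pos rfl, if_neg hne.symm]
      omega
    have hv' : netInflow tl hd f' v < 0 := by
      have hvb : v ≠ b := by rintro rfl; exact hb hv
      have hvs : v ≠ s := by rintro rfl; omega
      rw [hnet, if_neg hvb, if_neg hvs]
      omega
    obtain ⟨m, hm, hbv'⟩ := hbv.of_residualAdj_imp hadj
    obtain ⟨g, hg, hlt⟩ := ih m (by omega) hf' hb' hv' (or_self_iff.1 hbv')
    exact ⟨g, hg, by rw [hexcess, if_neg hb] at hlt; omega⟩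

/-- On the boundary of a set closed under residual arcs, `f` saturates its bounds. -/
theorem sum_netInflow_nonpos_of_closed {K : ℤ} {f : A → ℤ} (hf : Bounded K f) {R : Finset V}
    (hR : ∀ x ∈ R, ∀ y, ResidualAdj tl hd K f x y → y ∈ R)
    (hcut : ((entering tl hd R).card : ℤ) ≤ K * (leaving tl hd R).card) :
    ∑ v ∈ R, netInflow tl hd f v ≤ 0 := by
  have hin : ∀ a ∈ entering tl hd R, f a = 1 := by
    intro a ha
    simp only [entering, mem_filter] at ha
    by_contra hne
    exact ha.2.2 (hR _ ha.2.1 _ ⟨a, Or.inr ⟨rfl, rfl, lt_of_le_of_ne (hf a).1 (Ne.symm hne)⟩⟩)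
  have hout : ∀ a ∈ leaving tl hd R, f a = K := by
    intro a ha
    simp only [leaving, mem_filter] at ha
    by_contra hne
    exact ha.2.2 (hR _ ha.2.1 _ ⟨a, Or.inl ⟨rfl, rfl, lt_of_le_of_ne (hf a).2 hne⟩⟩)
  rw [sum_netInflow, Finset.sum_congr rfl hin, Finset.sum_congr rfl hout]
  simp only [Finset.sum_const, nsmul_eq_mul, mul_one]
  linarith

variable [Fintype V] {K : ℤ}

theorem exists_totalExcess_lt (hcut : CutCondition tl hd K) {f : A → ℤ} (hf : Bounded K f)
    {s : V} (hs : 0 < netInflow tl hd f s) :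
    ∃ f', Bounded K f' ∧ totalExcess tl hd f' < totalExcess tl hd f := by
  classical
  let R : Finset V := univ.filter fun x => ∃ n, ResidualPath tl hd K f n s x
  by_cases hdeficit : ∃ x ∈ R, netInflow tl hd f x < 0
  · obtain ⟨x, hxR, hx⟩ := hdeficit
    obtain ⟨n, hn⟩ := (mem_filter.1 hxR).2
    exact exists_totalExcess_lt_of_residualPath n hf hs hx hn
  push Not at hdeficit
  obtain ⟨v, hv⟩ := exists_netInflow_neg hs
  have hsR : s ∈ R := mem_filter.2 ⟨mem_univ s, 0, rfl⟩
  have hRuniv : R ≠ univ := fun h => (hdeficit v (h ▸ mem_univ v)).not_gt hv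
  have hclosed : ∀ x ∈ R, ∀ y, ResidualAdj tl hd K f x y → y ∈ R := by
    intro x hx y hxy
    obtain ⟨n, hn⟩ := (mem_filter.1 hx).2
    exact mem_filter.2 ⟨mem_univ y, n + 1, hn.succ_right hxy⟩
  have hpos : 0 < ∑ x ∈ R, netInflow tl hd f x := Finset.sum_pos' hdeficit ⟨s, hsR, hs⟩
  have := sum_netInflow_nonpos_of_closed hf hclosed (hcut R ⟨s, hsR⟩ hRuniv)
  omega

theorem exists_circulation_of_cutCondition (hK : 1 ≤ K) (hcut : CutCondition tl hd K) :
    ∃ f, Bounded K f ∧ ∀ v, netInflow tl hd f v = 0 := by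
  have hfin : {f : A → ℤ | Bounded K f}.Finite := by
    convert Set.Finite.pi fun _ : A => Set.finite_Icc 1 K
    ext f
    simp [Bounded, Pi.le_def, forall_and]
  obtain ⟨f, hf, hmin⟩ :=
    Set.exists_min_image _ (totalExcess tl hd) hfin ⟨fun _ => 1, fun _ => ⟨le_rfl, hK⟩⟩
  have hle (v : V) : netInflow tl hd f v ≤ 0 := by
    by_contra! hv
    obtain ⟨g, hg, hlt⟩ := exists_totalExcess_lt hcut hf hv
    exact (hmin g hg).not_gt hlt
  exact ⟨f, hf, fun v => (Finset.sum_eq_zero_iff_of_nonpos fun v _ => hle v).1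
    (sum_univ_netInflow f) v (mem_univ v)⟩

end Circulation

open Circulation

def tailOf (src tgt : E → V) (o : E → Bool) (e : E) : V := if o e then src e else tgt e

def headOf (src tgt : E → V) (o : E → Bool) (e : E) : V := if o e then tgt e else src e

section Orientation

variable {src tgt : E → V} {m : ℕ} {o : E → Bool}

section

omit [Fintype V]

theorem nzflow_iff {f : E → ℤ} :
    NZFlow src tgt m o f ↔
      Bounded ((m : ℤ) - 1) f ∧ ∀ v, netInflow (tailOf src tgt o) (headOf src tgt o) f v = 0 := by
  refine and_congr Iff.rfl (forall_congr' fun v => ?_)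
  rw [netInflow, sub_eq_zero, eq_comm]
  rfl

theorem filter_outgoing_eq_leaving (U : Finset V) :
    univ.filter (fun e => (o e = true ∧ src e ∈ U ∧ tgt e ∉ U) ∨
        (o e = false ∧ tgt e ∈ U ∧ src e ∉ U)) =
      leaving (tailOf src tgt o) (headOf src tgt o) U := by
  ext e
  simp only [leaving, mem_filter, mem_univ, true_and]
  cases h : o e <;> simp [tailOf, headOf, h]

theorem card_filter_crossing_eq (U : Finset V) :
    (univ.filter fun e => (src e ∈ U ∧ tgt e ∉ U) ∨ (tgt e ∈ U ∧ src e ∉ U)).card =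
      (leaving (tailOf src tgt o) (headOf src tgt o) U).card +
        (entering (tailOf src tgt o) (headOf src tgt o) U).card := by
  classical
  rw [← Finset.card_union_of_disjoint]
  · congr 1
    ext e
    simp only [leaving, entering, mem_union, mem_filter, mem_univ, true_and]
    cases h : o e <;> simp [tailOf, headOf, h, or_comm]
  · rw [Finset.disjoint_left]
    intro e h₁ h₂
    simp only [leaving, entering, mem_filter] at h₁ h₂
    tauto

end

theorem cutBalanced_of_cutCondition
    (h : CutCondition (tailOf src tgt o) (headOf src tgt o) ((m : ℤ) - 1)) :
    CutBalanced src tgt m o := by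
  intro U hU hU'
  rw [filter_outgoing_eq_leaving, card_filter_crossing_eq (o := o), ge_iff_le, one_div_mul_eq_div]
  set L := (leaving (tailOf src tgt o) (headOf src tgt o) U).card
  set N := (entering (tailOf src tgt o) (headOf src tgt o) U).card
  have hcut : ((L + N : ℕ) : ℤ) ≤ L * m := by
    have := h U hU hU'
    push_cast
    linarith
  exact div_le_of_le_mul₀ (Nat.cast_nonneg m) (Nat.cast_nonneg L) (by exact_mod_cast hcut)

theorem CutBalanced.cutCondition (hm : 0 < m) (h : CutBalanced src tgt m o) :
    CutCondition (tailOf src tgt o) (headOf src tgt o) ((m : ℤ) - 1) := by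
  intro U hU hU'
  have hbal := h U hU hU'
  rw [filter_outgoing_eq_leaving, card_filter_crossing_eq (o := o), ge_iff_le, one_div_mul_eq_div,
    div_le_iff₀ (by exact_mod_cast hm)] at hbal
  set L := (leaving (tailOf src tgt o) (headOf src tgt o) U).card
  set N := (entering (tailOf src tgt o) (headOf src tgt o) U).card
  have hcut : ((L + N : ℕ) : ℤ) ≤ L * m := by exact_mod_cast hbal
  push_cast at hcut
  linarith

theorem NZFlow.cutBalanced {f : E → ℤ} (h : NZFlow src tgt m o f) : CutBalanced src tgt m o :=
  cutBalanced_of_cutCondition fun U _ _ =>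
    card_entering_le_of_netInflow_eq_zero (nzflow_iff.1 h).1 (nzflow_iff.1 h).2 U

theorem CutBalanced.exists_nzflow (hm : 2 ≤ m) (h : CutBalanced src tgt m o) :
    ∃ f, NZFlow src tgt m o f := by
  obtain ⟨f, hf, h₀⟩ :=
    exists_circulation_of_cutCondition (by omega : (1 : ℤ) ≤ m - 1) (h.cutCondition (by omega))
  exact ⟨f, nzflow_iff.2 ⟨hf, h₀⟩⟩

end Orientation

section Cost

variable {c : E → Bool → ℤ} {o : E → Bool} {f : E → ℤ}

theorem costOrient_le_costFlow (hc : ∀ e, 0 ≤ c e (o e)) (hf : ∀ e, 1 ≤ f e) :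
    costOrient c o ≤ costFlow c o f :=
  Finset.sum_le_sum fun e _ => le_mul_of_one_le_right (hc e) (hf e)

theorem costFlow_le_mul_costOrient {M : ℤ} (hc : ∀ e, 0 ≤ c e (o e)) (hf : ∀ e, f e ≤ M) :
    costFlow c o f ≤ M * costOrient c o := by
  rw [costOrient, Finset.mul_sum]
  exact Finset.sum_le_sum fun e _ => by
    rw [mul_comm M]
    exact mul_le_mul_of_nonneg_left (hf e) (hc e)

end Cost

theorem wnzf_to_wcbo_reduction_general (src tgt : E → V) (c : E → Bool → ℤ)
    (hc : ∀ e b, 0 ≤ c e b) (k β : ℕ) (hk : 2 ≤ k)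
    (α : ℝ) (hα : 0 ≤ α)
    (o : E → Bool) (f : E → ℤ) (hof : NZFlow src tgt (β * k) o f)
    (o₁ : E → Bool) (f₁ : E → ℤ)
    (h₁min : ∀ (o' : E → Bool) (f' : E → ℤ), NZFlow src tgt k o' f' →
      costFlow c o₁ f₁ ≤ costFlow c o' f')
    (happrox : (costFlow c o f : ℝ) ≤ α * (costFlow c o₁ f₁ : ℝ))
    (o₂ : E → Bool) (h₂ : CutBalanced src tgt k o₂) :
    CutBalanced src tgt (β * k) o ∧
      (costOrient c o : ℝ) ≤ ((k : ℝ) - 1) * α * (costOrient c o₂ : ℝ) := by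
  refine ⟨hof.cutBalanced, ?_⟩
  obtain ⟨g, hg⟩ := h₂.exists_nzflow hk
  have hflow : costOrient c o ≤ costFlow c o f :=
    costOrient_le_costFlow (fun e => hc e _) fun e => (hof.1 e).1
  have hopt : costFlow c o₁ f₁ ≤ (k - 1) * costOrient c o₂ :=
    (h₁min o₂ g hg).trans (costFlow_le_mul_costOrient (fun e => hc e _) fun e => (hg.1 e).2)
  calc (costOrient c o : ℝ) ≤ costFlow c o f := by exact_mod_cast hflow
    _ ≤ α * costFlow c o₁ f₁ := happrox
    _ ≤ α * ((k - 1) * costOrient c o₂) := by gcongr; exact_mod_cast hopt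
    _ = ((k : ℝ) - 1) * α * costOrient c o₂ := by ring

/-- If (Ē, f) is a nowhere-zero βk-flow with c(f) ≤ α·c(f₁*) for a
min-cost nowhere-zero k-flow f₁*, then Ē is a βk-cut-balanced orientation with
c(Ē) ≤ (k−1)·α·c(Ē₂*), where Ē₂* is a min-cost k-cut-balanced orientation. -/
theorem wnzf_to_wcbo_reduction (src tgt : E → V) (c : E → Bool → ℤ)
    (hc : ∀ e b, 0 ≤ c e b) (k β : ℕ) (hk : 2 ≤ k) (hβ : 1 ≤ β)
    (α : ℝ) (hα : 0 ≤ α)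
    (o : E → Bool) (f : E → ℤ) (hof : NZFlow src tgt (β * k) o f)
    (o₁ : E → Bool) (f₁ : E → ℤ) (h₁ : NZFlow src tgt k o₁ f₁)
    (h₁min : ∀ (o' : E → Bool) (f' : E → ℤ), NZFlow src tgt k o' f' →
      costFlow c o₁ f₁ ≤ costFlow c o' f')
    (happrox : (costFlow c o f : ℝ) ≤ α * (costFlow c o₁ f₁ : ℝ))
    (o₂ : E → Bool) (h₂ : CutBalanced src tgt k o₂)
    (h₂min : ∀ o' : E → Bool, CutBalanced src tgt k o' →
      costOrient c o₂ ≤ costOrient c o') :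
    CutBalanced src tgt (β * k) o ∧
      (costOrient c o : ℝ) ≤ ((k : ℝ) - 1) * α * (costOrient c o₂ : ℝ) :=
  wnzf_to_wcbo_reduction_general src tgt c hc k β hk α hα o f hof o₁ f₁ h₁min happrox o₂ h₂
end
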